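/- (Eckart–Young, Frobenius norm; optimality of the hard-thresholding denoiser.) Let A ∈ ℝ^{m×n} have singular value decomposition A = Σᵢ σᵢ uᵢvᵢᵀ with σ₁ ≥ σ₂ ≥ ⋯ ≥ 0, and let r ≤ min(m,n). Then the truncated SVD A_r = Σ_{i=1}^{r} σᵢ uᵢvᵢᵀ satisfies ‖A − A_r‖_F ≤ ‖A − B‖_F for every matrix B ∈ ℝ^{m×n} of rank at most r, and ‖A − A_r‖_F² = Σ_{i>r} σᵢ². -/

import Mathlib

/-!
The tail `A - A_r = ∑_{i ≥ r} σᵢ uᵢvᵢᵀ` has squared Frobenius norm `∑_{i ≥ r} σᵢ²` by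
orthonormality of the `uᵢ` and of the `vᵢ`.

For `B` of rank at most `r`, take an orthonormal basis `(w_k)` of `ker B`; its orthogonal
complement has dimension `rank B ≤ r`. Bessel's inequality on the rows of `A - B` gives
`‖A - B‖_F² ≥ ∑_k ‖(A - B) w_k‖² = ∑_k ‖A w_k‖² = ∑ᵢ σᵢ² cᵢ` with
`cᵢ = ∑_k ⟪vᵢ, w_k⟫² = ‖P_{ker B} vᵢ‖² ∈ [0, 1]`, and `∑ᵢ cᵢ ≥ min m n - r` because projecting
the orthonormal `vᵢ` onto `ker B` loses at most `dim (ker B)ᗮ ≤ r` of their total squared norm.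
Finally, against the nonincreasing nonnegative `σᵢ²`, weights `cᵢ ∈ [0, 1]` of total mass at
least `min m n - r` do at least as well as the indicator of the indices `i ≥ r`:
`∑ᵢ σᵢ² cᵢ ≥ ∑_{i ≥ r} σᵢ²`.
-/

open Matrix Finset

noncomputable def frobSq {m n : ℕ} (A : Matrix (Fin m) (Fin n) ℝ) : ℝ :=
  ∑ i, ∑ j, (A i j) ^ 2

open WithLp (toLp)
open scoped RealInnerProductSpace

theorem sum_filter_not_le_sum_mul_of_threshold {ι : Type*} [Fintype ι] (p : ι → Prop)
    [DecidablePred p] {f c : ι → ℝ} {t : ℝ} (ht : 0 ≤ t) (hp : ∀ i, p i → t ≤ f i)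
    (hnp : ∀ i, ¬ p i → f i ≤ t) (hc0 : ∀ i, 0 ≤ c i) (hc1 : ∀ i, c i ≤ 1)
    (hc : (Fintype.card ι : ℝ) - #{i | p i} ≤ ∑ i, c i) :
    ∑ i with ¬ p i, f i ≤ ∑ i, f i * c i := by
  have hcard : (Fintype.card ι : ℝ) = #{i | p i} + #{i | ¬ p i} := by
    exact_mod_cast (card_filter_add_card_filter_not (s := univ) p).symm
  have hsplit (g : ι → ℝ) : ∑ i, g i = ∑ i with p i, g i + ∑ i with ¬ p i, g i :=
    (sum_filter_add_sum_filter_not univ p g).symm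
  calc ∑ i with ¬ p i, f i
      = ∑ i with ¬ p i, f i * c i + ∑ i with ¬ p i, f i * (1 - c i) := by
        rw [← sum_add_distrib]; exact sum_congr rfl fun i _ => by ring
    _ ≤ ∑ i with ¬ p i, f i * c i + ∑ i with ¬ p i, t * (1 - c i) := by
        gcongr with i hi
        · linarith [hc1 i]
        · exact hnp i (mem_filter.1 hi).2
    _ ≤ ∑ i with ¬ p i, f i * c i + ∑ i with p i, t * c i := by
        rw [← mul_sum, ← mul_sum, sum_sub_distrib, sum_const, nsmul_one]
        rw [hsplit c, hcard] at hc
        gcongr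
        linarith
    _ ≤ ∑ i with ¬ p i, f i * c i + ∑ i with p i, f i * c i := by
        gcongr with i hi
        · exact hc0 i
        · exact hp i (mem_filter.1 hi).2
    _ = ∑ i, f i * c i := by rw [add_comm, hsplit]

theorem Antitone.sum_tail_le_sum_mul {N r : ℕ} (hr : r ≤ N) {f c : Fin N → ℝ}
    (hf : Antitone f) (hf0 : ∀ i, 0 ≤ f i) (hc0 : ∀ i, 0 ≤ c i) (hc1 : ∀ i, c i ≤ 1)
    (hc : (N : ℝ) - r ≤ ∑ i, c i) :
    ∑ i ∈ univ.filter (fun i : Fin N => r ≤ (i : ℕ)), f i ≤ ∑ i, f i * c i := by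
  have hcard : (Fintype.card (Fin N) : ℝ) - #{i : Fin N | (i : ℕ) < r} ≤ ∑ i, c i := by
    rwa [Fin.card_filter_val_lt, min_eq_right hr, Fintype.card_fin]
  rw [filter_congr fun (i : Fin N) _ => (not_lt (a := (i : ℕ)) (b := r)).symm]
  rcases hr.lt_or_eq with hrN | rfl
  · refine sum_filter_not_le_sum_mul_of_threshold _ (hf0 ⟨r, hrN⟩) (fun i hi => hf ?_)
      (fun i hi => hf ?_) hc0 hc1 hcard
    · exact Fin.mk_le_of_le_val hi.le
    · exact Fin.le_def.2 (not_lt.1 hi)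
  · exact sum_filter_not_le_sum_mul_of_threshold _ le_rfl (fun i _ => hf0 i)
      (fun i hi => absurd i.isLt hi) hc0 hc1 hcard

section InnerProductSpace

variable {E : Type*} [NormedAddCommGroup E] [InnerProductSpace ℝ E]

theorem Orthonormal.sum_sq_inner_le {ι : Type*} [Fintype ι] {v : ι → E} (hv : Orthonormal ℝ v)
    (x : E) : ∑ i, ⟪v i, x⟫ ^ 2 ≤ ‖x‖ ^ 2 := by
  simpa only [Real.norm_eq_abs, sq_abs] using hv.sum_inner_products_le x (s := univ)

theorem Orthonormal.sum_sum_sq_inner_le_card {ι κ : Type*} [Fintype ι] [Fintype κ] {v : ι → E}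
    {e : κ → E} (hv : Orthonormal ℝ v) (he : Orthonormal ℝ e) :
    ∑ i, ∑ j, ⟪e j, v i⟫ ^ 2 ≤ Fintype.card κ := by
  rw [sum_comm, ← nsmul_one, ← card_univ, ← sum_const]
  refine sum_le_sum fun j _ => ?_
  simpa only [real_inner_comm, he.1 j, one_pow] using hv.sum_sq_inner_le (e j)

theorem OrthonormalBasis.sum_sq_inner_eq_norm_sq_orthogonalProjectionOnto {κ : Type*} [Fintype κ]
    {K : Submodule ℝ E} [K.HasOrthogonalProjection] (b : OrthonormalBasis κ ℝ K) (x : E) :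
    ∑ k, ⟪(b k : E), x⟫ ^ 2 = ‖K.orthogonalProjectionOnto x‖ ^ 2 := by
  simp_rw [← b.sum_sq_inner_right, Submodule.inner_orthogonalProjectionOnto_eq_of_mem_left]

theorem Orthonormal.card_sub_finrank_orthogonal_le_sum_sq_inner [FiniteDimensional ℝ E]
    {ι κ : Type*} [Fintype ι] [Fintype κ] {v : ι → E} (hv : Orthonormal ℝ v)
    {K : Submodule ℝ E} (w : OrthonormalBasis κ ℝ K) :
    (Fintype.card ι : ℝ) - Module.finrank ℝ Kᗮ ≤ ∑ i, ∑ k, ⟪(w k : E), v i⟫ ^ 2 := by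
  let e := stdOrthonormalBasis ℝ Kᗮ
  have he : Orthonormal ℝ fun j => (e j : E) := e.orthonormal.comp_linearIsometry Kᗮ.subtypeₗᵢ
  have hpyth (i : ι) : ∑ k, ⟪(w k : E), v i⟫ ^ 2 = 1 - ∑ j, ⟪(e j : E), v i⟫ ^ 2 := by
    rw [w.sum_sq_inner_eq_norm_sq_orthogonalProjectionOnto,
      e.sum_sq_inner_eq_norm_sq_orthogonalProjectionOnto, ← one_pow 2, ← hv.1 i,
      Submodule.norm_sq_eq_add_norm_sq_projection (v i) K]
    ring
  have hcard := hv.sum_sum_sq_inner_le_card he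
  rw [Fintype.card_fin] at hcard
  simp_rw [hpyth, sum_sub_distrib, sum_const, card_univ, nsmul_one]
  linarith

end InnerProductSpace

section Matrix

variable {l p : Type*} [Fintype l] [Fintype p]

theorem orthonormal_toLp_of_dotProduct {ι : Type*} [DecidableEq ι] {u : ι → p → ℝ}
    (hu : ∀ i j, u i ⬝ᵥ u j = if i = j then (1 : ℝ) else 0) :
    Orthonormal ℝ fun i => toLp 2 (u i) := by
  refine orthonormal_iff_ite.2 fun i j => ?_
  simp only [EuclideanSpace.inner_toLp_toLp, star_trivial, hu, eq_comm]

theorem norm_sq_toLpLin_eq_sum_sq_inner_row [DecidableEq p] (M : Matrix l p ℝ)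
    (x : EuclideanSpace ℝ p) :
    ‖toLpLin 2 2 M x‖ ^ 2 = ∑ a, ⟪toLp 2 (M a), x⟫ ^ 2 := by
  rw [EuclideanSpace.norm_sq_eq]
  refine sum_congr rfl fun a _ => ?_
  rw [Real.norm_eq_abs, sq_abs, real_inner_comm]
  rfl

variable {m n : ℕ}

theorem frobSq_eq_sum_norm_sq_row (M : Matrix (Fin m) (Fin n) ℝ) :
    frobSq M = ∑ a, ‖toLp 2 (M a)‖ ^ 2 := by
  simp only [frobSq, EuclideanSpace.norm_sq_eq, Real.norm_eq_abs, sq_abs]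

theorem frobSq_eq_sum_norm_sq_toLpLin {κ : Type*} [Fintype κ]
    (b : OrthonormalBasis κ ℝ (EuclideanSpace ℝ (Fin n))) (M : Matrix (Fin m) (Fin n) ℝ) :
    frobSq M = ∑ k, ‖toLpLin 2 2 M (b k)‖ ^ 2 := by
  simp_rw [frobSq_eq_sum_norm_sq_row, norm_sq_toLpLin_eq_sum_sq_inner_row, ← b.sum_sq_inner_left]
  exact sum_comm

theorem Orthonormal.sum_norm_sq_toLpLin_le_frobSq {κ : Type*} [Fintype κ]
    {w : κ → EuclideanSpace ℝ (Fin n)} (hw : Orthonormal ℝ w) (M : Matrix (Fin m) (Fin n) ℝ) :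
    ∑ k, ‖toLpLin 2 2 M (w k)‖ ^ 2 ≤ frobSq M := by
  simp_rw [frobSq_eq_sum_norm_sq_row, norm_sq_toLpLin_eq_sum_sq_inner_row]
  rw [sum_comm]
  refine sum_le_sum fun a _ => ?_
  simpa only [real_inner_comm] using hw.sum_sq_inner_le (toLp 2 (M a))

theorem toLpLin_sum_smul_vecMulVec {ι : Type*} (s : Finset ι) (c : ι → ℝ)
    (u : ι → Fin m → ℝ) (v : ι → Fin n → ℝ) (x : EuclideanSpace ℝ (Fin n)) :
    toLpLin 2 2 (∑ i ∈ s, c i • vecMulVec (u i) (v i)) x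
      = ∑ i ∈ s, (c i * ⟪toLp 2 (v i), x⟫) • toLp 2 (u i) := by
  ext a
  simp only [map_sum, map_smul, LinearMap.coe_sum, LinearMap.coe_smul, Finset.sum_apply,
    Pi.smul_apply, toLpLin_apply, WithLp.ofLp_sum, WithLp.ofLp_smul, mulVec, dotProduct,
    vecMulVec_apply, smul_eq_mul, EuclideanSpace.inner_eq_star_dotProduct, star_trivial, mul_sum,
    sum_mul]
  exact sum_congr rfl fun i _ => sum_congr rfl fun j _ => by ring

theorem norm_sq_toLpLin_sum_smul_vecMulVec {ι : Type*} (s : Finset ι) (c : ι → ℝ)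
    {u : ι → Fin m → ℝ} (hu : Orthonormal ℝ fun i => toLp 2 (u i)) (v : ι → Fin n → ℝ)
    (x : EuclideanSpace ℝ (Fin n)) :
    ‖toLpLin 2 2 (∑ i ∈ s, c i • vecMulVec (u i) (v i)) x‖ ^ 2
      = ∑ i ∈ s, c i ^ 2 * ⟪toLp 2 (v i), x⟫ ^ 2 := by
  rw [← real_inner_self_eq_norm_sq, toLpLin_sum_smul_vecMulVec, hu.inner_sum]
  exact sum_congr rfl fun i _ => by rw [starRingEnd_apply, star_trivial]; ring

theorem frobSq_sum_smul_vecMulVec {ι : Type*} (s : Finset ι) (c : ι → ℝ)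
    {u : ι → Fin m → ℝ} (hu : Orthonormal ℝ fun i => toLp 2 (u i))
    {v : ι → Fin n → ℝ} (hv : Orthonormal ℝ fun i => toLp 2 (v i)) :
    frobSq (∑ i ∈ s, c i • vecMulVec (u i) (v i)) = ∑ i ∈ s, c i ^ 2 := by
  let b := EuclideanSpace.basisFun (Fin n) ℝ
  simp_rw [frobSq_eq_sum_norm_sq_toLpLin b, norm_sq_toLpLin_sum_smul_vecMulVec s c hu]
  rw [sum_comm]
  refine sum_congr rfl fun i _ => ?_
  rw [← mul_sum, b.sum_sq_inner_left, hv.1 i, one_pow, mul_one]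

theorem finrank_orthogonal_ker_toLpLin (B : Matrix (Fin m) (Fin n) ℝ) :
    Module.finrank ℝ (LinearMap.ker (toLpLin 2 2 B))ᗮ = B.rank := by
  have hsum := (LinearMap.ker (toLpLin 2 2 B)).finrank_add_finrank_orthogonal
  have hrn := LinearMap.finrank_range_add_finrank_ker (toLpLin 2 2 B)
  have hrank : B.rank = Module.finrank ℝ (LinearMap.range (toLpLin 2 2 B)) :=
    B.rank_eq_finrank_range_toLin (PiLp.basisFun 2 ℝ (Fin m)) (PiLp.basisFun 2 ℝ (Fin n))
  rw [finrank_euclideanSpace_fin] at hsum hrn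
  omega

end Matrix

section EckartYoung

variable {m n N : ℕ}

theorem sum_sq_mul_sum_sq_inner_le_frobSq_sub {ι κ : Type*} [Fintype ι] [Fintype κ] (σ : ι → ℝ)
    {u : ι → Fin m → ℝ} (hu : Orthonormal ℝ fun i => toLp 2 (u i)) (v : ι → Fin n → ℝ)
    (B : Matrix (Fin m) (Fin n) ℝ) {w : κ → EuclideanSpace ℝ (Fin n)} (hw : Orthonormal ℝ w)
    (hBw : ∀ k, toLpLin 2 2 B (w k) = 0) :
    ∑ i, σ i ^ 2 * ∑ k, ⟪w k, toLp 2 (v i)⟫ ^ 2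
      ≤ frobSq (∑ i, σ i • vecMulVec (u i) (v i) - B) := by
  calc ∑ i, σ i ^ 2 * ∑ k, ⟪w k, toLp 2 (v i)⟫ ^ 2
      = ∑ k, ‖toLpLin 2 2 (∑ i, σ i • vecMulVec (u i) (v i) - B) (w k)‖ ^ 2 := by
        simp_rw [map_sub, LinearMap.sub_apply, hBw, sub_zero,
          norm_sq_toLpLin_sum_smul_vecMulVec _ _ hu, mul_sum, real_inner_comm (w _)]
        exact sum_comm
    _ ≤ frobSq (∑ i, σ i • vecMulVec (u i) (v i) - B) := hw.sum_norm_sq_toLpLin_le_frobSq _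

theorem sum_sq_tail_le_frobSq_sub_of_rank_le {r : ℕ} (hr : r ≤ N) {σ : Fin N → ℝ}
    (hσ : Antitone σ) (hσ0 : ∀ i, 0 ≤ σ i) {u : Fin N → Fin m → ℝ}
    (hu : Orthonormal ℝ fun i => toLp 2 (u i)) {v : Fin N → Fin n → ℝ}
    (hv : Orthonormal ℝ fun i => toLp 2 (v i)) {B : Matrix (Fin m) (Fin n) ℝ} (hB : B.rank ≤ r) :
    ∑ i ∈ univ.filter (fun i : Fin N => r ≤ (i : ℕ)), σ i ^ 2
      ≤ frobSq (∑ i, σ i • vecMulVec (u i) (v i) - B) := by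
  let K := LinearMap.ker (toLpLin 2 2 B)
  let w := stdOrthonormalBasis ℝ K
  have hw : Orthonormal ℝ fun k => (w k : EuclideanSpace ℝ (Fin n)) :=
    w.orthonormal.comp_linearIsometry K.subtypeₗᵢ
  have hσ2 : Antitone fun i => σ i ^ 2 := fun i j hij => pow_le_pow_left₀ (hσ0 j) (hσ hij) 2
  have hc1 (i : Fin N) : ∑ k, ⟪(w k : EuclideanSpace ℝ (Fin n)), toLp 2 (v i)⟫ ^ 2 ≤ 1 := by
    simpa only [hv.1 i, one_pow] using hw.sum_sq_inner_le (toLp 2 (v i))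
  have hc : (N : ℝ) - r ≤ ∑ i, ∑ k, ⟪(w k : EuclideanSpace ℝ (Fin n)), toLp 2 (v i)⟫ ^ 2 := by
    have hdim := hv.card_sub_finrank_orthogonal_le_sum_sq_inner w
    rw [Fintype.card_fin, finrank_orthogonal_ker_toLpLin] at hdim
    have hB' : (B.rank : ℝ) ≤ r := by exact_mod_cast hB
    linarith
  calc ∑ i ∈ univ.filter (fun i : Fin N => r ≤ (i : ℕ)), σ i ^ 2
      ≤ ∑ i, σ i ^ 2 * ∑ k, ⟪(w k : EuclideanSpace ℝ (Fin n)), toLp 2 (v i)⟫ ^ 2 :=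
        hσ2.sum_tail_le_sum_mul hr (fun i => sq_nonneg _)
          (fun i => sum_nonneg fun k _ => sq_nonneg _) hc1 hc
    _ ≤ frobSq (∑ i, σ i • vecMulVec (u i) (v i) - B) :=
        sum_sq_mul_sum_sq_inner_le_frobSq_sub σ hu v B hw fun k => (w k).2

end EckartYoung

/-- **Eckart–Young theorem (Frobenius norm); optimality of hard-thresholding denoising.**
Let `A = ∑ᵢ σᵢ uᵢvᵢᵀ` be an SVD of `A ∈ ℝ^{m×n}` (with `σ₁ ≥ σ₂ ≥ ⋯ ≥ 0` and orthonormal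
families `uᵢ`, `vᵢ`), and `r ≤ min(m,n)`. Then the truncated SVD `A_r = ∑_{i<r} σᵢ uᵢvᵢᵀ`
satisfies `‖A − A_r‖_F ≤ ‖A − B‖_F` for every `B` of rank at most `r`, and
`‖A − A_r‖_F² = ∑_{i ≥ r} σᵢ²`. -/
theorem stmt_14 {m n : ℕ} (A : Matrix (Fin m) (Fin n) ℝ)
    (σ : Fin (min m n) → ℝ) (u : Fin (min m n) → Fin m → ℝ) (v : Fin (min m n) → Fin n → ℝ)
    (hσ_mono : Antitone σ) (hσ_nonneg : ∀ i, 0 ≤ σ i)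
    (hu : ∀ i j, u i ⬝ᵥ u j = if i = j then (1 : ℝ) else 0)
    (hv : ∀ i j, v i ⬝ᵥ v j = if i = j then (1 : ℝ) else 0)
    (hA : A = ∑ i, σ i • Matrix.vecMulVec (u i) (v i))
    (r : ℕ) (hr : r ≤ min m n) :
    (∀ B : Matrix (Fin m) (Fin n) ℝ, B.rank ≤ r →
      Real.sqrt (frobSq (A - ∑ i ∈ Finset.univ.filter (fun i : Fin (min m n) => (i : ℕ) < r),
          σ i • Matrix.vecMulVec (u i) (v i)))
        ≤ Real.sqrt (frobSq (A - B))) ∧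
    frobSq (A - ∑ i ∈ Finset.univ.filter (fun i : Fin (min m n) => (i : ℕ) < r),
        σ i • Matrix.vecMulVec (u i) (v i))
      = ∑ i ∈ Finset.univ.filter (fun i : Fin (min m n) => r ≤ (i : ℕ)), (σ i) ^ 2 := by
  have hu' := orthonormal_toLp_of_dotProduct hu
  have hv' := orthonormal_toLp_of_dotProduct hv
  have htail : A - ∑ i ∈ univ.filter (fun i : Fin (min m n) => (i : ℕ) < r),
      σ i • vecMulVec (u i) (v i)
        = ∑ i ∈ univ.filter (fun i : Fin (min m n) => r ≤ (i : ℕ)),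
            σ i • vecMulVec (u i) (v i) := by
    rw [hA, ← sum_filter_add_sum_filter_not univ (fun i : Fin (min m n) => (i : ℕ) < r),
      add_sub_cancel_left]
    simp only [not_lt]
  have hfrob := htail ▸ frobSq_sum_smul_vecMulVec _ σ hu' hv'
  refine ⟨fun B hB => Real.sqrt_le_sqrt ?_, hfrob⟩
  rw [hfrob, hA]
  exact sum_sq_tail_le_frobSq_sub_of_rank_le hr hσ_mono hσ_nonneg hu' hv' hB
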